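/- For any single-qubit density matrix ρ, the modified trace distance measure of coherence equals the l₁-norm of coherence: inf_{λ ≥ 0, δ diagonal density matrix} ‖ρ − λδ‖_tr = Σ_{i≠j} |ρ_{ij}|. -/

import Mathlib

/-!
The trace norm of a `2 × 2` matrix `A = [[a, b], [c, d]]` is `√μ + √ν` for the eigenvalues
`μ, ν` of `AᴴA`, so `‖A‖_tr² = μ + ν + 2√(μν) = Σ |A_ij|² + 2 |det A|`. Since
`|bc| ≤ |ad| + |det A|` and `|a|² + |d|² ≥ 2|ad|`, this gives `‖A‖_tr ≥ |b| + |c|`, with equality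
when `a = d = 0`. Subtracting `λδ` with `δ` diagonal leaves the off-diagonal entries of `ρ`
unchanged, and the bound is attained at `λ = 1`, `δ` the diagonal part of `ρ`.
-/

open Matrix
open scoped ComplexOrder

/-- The trace norm of a matrix `A`: `‖A‖_tr = Tr √(AᴴA)`. -/
noncomputable def traceNorm {d : ℕ} (A : Matrix (Fin d) (Fin d) ℂ) : ℝ :=
  (((Matrix.isHermitian_conjTranspose_mul_self A).eigenvectorUnitary.1 *
      diagonal (((↑) : ℝ → ℂ) ∘ (√·) ∘ (Matrix.isHermitian_conjTranspose_mul_self A).eigenvalues) *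
      (star (Matrix.isHermitian_conjTranspose_mul_self A).eigenvectorUnitary :
        Matrix (Fin d) (Fin d) ℂ)).trace).re

section
variable {m n : Type*} [Fintype m] [Fintype n]

lemma re_trace_conjTranspose_mul_self (A : Matrix m n ℂ) :
    (Aᴴ * A).trace.re = ∑ i, ∑ j, ‖A i j‖ ^ 2 := by
  rw [Finset.sum_comm]
  simp [trace, mul_apply, Complex.conj_mul', ← Complex.ofReal_pow]

variable [DecidableEq n]

lemma sum_eigenvalues_conjTranspose_mul_self (A : Matrix m n ℂ) :
    ∑ i, (isHermitian_conjTranspose_mul_self A).eigenvalues i = ∑ i, ∑ j, ‖A i j‖ ^ 2 := by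
  rw [← re_trace_conjTranspose_mul_self,
    (isHermitian_conjTranspose_mul_self A).trace_eq_sum_eigenvalues]
  simp

lemma prod_eigenvalues_conjTranspose_mul_self (A : Matrix n n ℂ) :
    ∏ i, (isHermitian_conjTranspose_mul_self A).eigenvalues i = ‖A.det‖ ^ 2 := by
  have h := (isHermitian_conjTranspose_mul_self A).det_eq_prod_eigenvalues
  rw [det_mul, det_conjTranspose, Complex.star_def, Complex.conj_mul'] at h
  exact Complex.ofReal_injective (by push_cast; exact h.symm)

end

lemma traceNorm_eq_sum_sqrt_eigenvalues {d : ℕ} (A : Matrix (Fin d) (Fin d) ℂ) :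
    traceNorm A = ∑ i, √((isHermitian_conjTranspose_mul_self A).eigenvalues i) := by
  rw [traceNorm, trace_mul_comm, ← Matrix.mul_assoc, Unitary.coe_star_mul_self, Matrix.one_mul,
    trace_diagonal, Complex.re_sum]
  simp

lemma traceNorm_nonneg {d : ℕ} (A : Matrix (Fin d) (Fin d) ℂ) : 0 ≤ traceNorm A := by
  rw [traceNorm_eq_sum_sqrt_eigenvalues]
  positivity

lemma traceNorm_sq_fin_two (A : Matrix (Fin 2) (Fin 2) ℂ) :
    traceNorm A ^ 2 = ∑ i, ∑ j, ‖A i j‖ ^ 2 + 2 * ‖A.det‖ := by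
  have h0 := eigenvalues_conjTranspose_mul_self_nonneg A
  have hsum := sum_eigenvalues_conjTranspose_mul_self A
  have hprod := prod_eigenvalues_conjTranspose_mul_self A
  rw [Fin.sum_univ_two] at hsum
  rw [Fin.prod_univ_two] at hprod
  rw [traceNorm_eq_sum_sqrt_eigenvalues, Fin.sum_univ_two, add_sq, Real.sq_sqrt (h0 0),
    Real.sq_sqrt (h0 1), mul_assoc, ← Real.sqrt_mul (h0 0), hprod, Real.sqrt_sq (norm_nonneg _),
    ← hsum]
  ring

lemma norm_add_norm_le_traceNorm_fin_two (A : Matrix (Fin 2) (Fin 2) ℂ) :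
    ‖A 0 1‖ + ‖A 1 0‖ ≤ traceNorm A := by
  have hsq := traceNorm_sq_fin_two A
  have hanti : ‖A 0 1‖ * ‖A 1 0‖ ≤ ‖A 0 0‖ * ‖A 1 1‖ + ‖A.det‖ := by
    rw [← norm_mul, ← norm_mul, det_fin_two]
    calc ‖A 0 1 * A 1 0‖ = ‖A 0 0 * A 1 1 - (A 0 0 * A 1 1 - A 0 1 * A 1 0)‖ := by ring_nf
      _ ≤ _ := norm_sub_le _ _
  simp only [Fin.sum_univ_two] at hsq
  refine (pow_le_pow_iff_left₀ (by positivity) (traceNorm_nonneg A) two_ne_zero).mp ?_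
  nlinarith [sq_nonneg (‖A 0 0‖ - ‖A 1 1‖)]

lemma traceNorm_fin_two_of_diag_eq_zero {A : Matrix (Fin 2) (Fin 2) ℂ} (h₀ : A 0 0 = 0)
    (h₁ : A 1 1 = 0) : traceNorm A = ‖A 0 1‖ + ‖A 1 0‖ := by
  have hsq := traceNorm_sq_fin_two A
  simp only [Fin.sum_univ_two, det_fin_two, h₀, h₁, norm_zero, zero_mul, zero_sub, norm_neg,
    norm_mul] at hsq
  refine (pow_left_inj₀ (traceNorm_nonneg A) (by positivity) two_ne_zero).mp ?_
  rw [hsq]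
  ring

lemma Matrix.IsDiag.sub_smul_apply_of_ne {n S R : Type*} [AddGroup R] [SMulZeroClass S R]
    {δ : Matrix n n R} (hδ : δ.IsDiag) (A : Matrix n n R) (l : S) {i j : n} (hij : i ≠ j) :
    (A - l • δ) i j = A i j := by
  simp [hδ hij]

/-- For any single-qubit density matrix `ρ`, the modified trace distance measure of
coherence equals the `l₁`-norm of coherence. -/
theorem modified_trace_coherence_eq_l1_qubit (ρ : Matrix (Fin 2) (Fin 2) ℂ)
    (hρ : ρ.PosSemidef) (hρtr : ρ.trace = 1) :
    sInf {x : ℝ | ∃ (l : ℝ) (δ : Matrix (Fin 2) (Fin 2) ℂ),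
        0 ≤ l ∧ δ.PosSemidef ∧ δ.trace = 1 ∧ δ.IsDiag ∧
        x = traceNorm (ρ - l • δ)}
      = ∑ i, ∑ j, (if i = j then 0 else ‖ρ i j‖) := by
  have hl₁ : ∑ i, ∑ j, (if i = j then 0 else ‖ρ i j‖) = ‖ρ 0 1‖ + ‖ρ 1 0‖ := by
    simp [Fin.sum_univ_two]
  rw [hl₁]
  refine IsLeast.csInf_eq ⟨?_, ?_⟩
  · refine ⟨1, diagonal ρ.diag, zero_le_one, PosSemidef.diagonal fun _ ↦ hρ.diag_nonneg,
      by rwa [trace_diagonal], isDiag_diagonal _, ?_⟩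
    rw [traceNorm_fin_two_of_diag_eq_zero (by simp) (by simp),
      (isDiag_diagonal _).sub_smul_apply_of_ne _ _ zero_ne_one,
      (isDiag_diagonal _).sub_smul_apply_of_ne _ _ one_ne_zero]
  · rintro x ⟨l, δ, -, -, -, hδ, rfl⟩
    simpa only [hδ.sub_smul_apply_of_ne _ _ zero_ne_one, hδ.sub_smul_apply_of_ne _ _ one_ne_zero]
      using norm_add_norm_le_traceNorm_fin_two (ρ - l • δ)
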